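/- Let n ≥ 1 be an integer, ν a real number that is not an integer, and θ a real number with 0 < θ < π. Then the series Σ_{k=0}^{∞} [ ∏_{j=0}^{k−1} ((1/2+ν+j)(1/2−ν+j)) / ((n+1/2+j)(j+1)) ] · (sin(θ/2))^{2k} converges and its sum equals ( ∏_{p=0}^{n−1} (2p+1)/(ν−p) ) · (2^{3n−2} sin(θ/2)^{2n−1})^{−1} · Σ_{k=0}^{n−1} [ ∏_{q=1}^{k} ((q−n)(q+ν−n)) / (q(q+ν)) ] · sin((1−n+ν+2k)θ). -/

import Mathlib

/-!
Write `s = sin (θ / 2)` and `a_c(k)` for the coefficients of `₂F₁(1/2 + ν, 1/2 - ν; c + 1/2; x)`.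
Multiplied by `s ^ (2n - 1)`, the claim says that `W_n(θ) = ∑ a_n(k) s ^ (2k + 2n - 1)` equals a
trigonometric sum `K_n(θ)`; we prove this on `(-π, π)` by induction on `n`.
For `n = 1`, the hypergeometric equation shows that `2 W_1` and `cos (θ / 2) ∑ a_0(k) s ^ (2k)`
solve `f' = g, g' = -ν² f` with initial values `0, 1`, so `W_1 = sin (ν θ) / (2 ν)`.
For the step, termwise differentiation and the contiguous relation
`(2k + 2n + 1) a_{n+1}(k) = (2n + 1) a_n(k)` give `W_{n+1}' = (2n + 1) / 4 · sin θ · W_n`; the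
product-to-sum formula and a summation by parts show that `K_{n+1}` satisfies the same equation,
and both sides vanish at `θ = 0`.
-/

open Real Finset Set

namespace HypergeometricTrig

lemma summable_succ_mul_geometric {r : ℝ} (hr0 : 0 ≤ r) (hr1 : r < 1) :
    Summable (fun k : ℕ => ((k : ℝ) + 1) * r ^ k) := by
  have hr : ‖r‖ < 1 := by rwa [norm_of_nonneg hr0]
  refine ((summable_pow_mul_geometric_of_norm_lt_one 1 hr).add
    (summable_geometric_of_lt_one hr0 hr1)).congr fun k => ?_
  ring

lemma abs_pow_two_mul_add_le {t r : ℝ} (ht : |t| ≤ r) (hr : r ≤ 1) (k m : ℕ) :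
    |t ^ (2 * k + m)| ≤ r ^ k := by
  rw [abs_pow]
  calc |t| ^ (2 * k + m) ≤ r ^ (2 * k + m) := pow_le_pow_left₀ (abs_nonneg t) ht _
    _ ≤ r ^ k := pow_le_pow_of_le_one ((abs_nonneg t).trans ht) hr (by omega)

lemma summable_mul_pow_two_mul_of_abs_le {a : ℕ → ℝ} {C t : ℝ}
    (ha : ∀ k, |a k| ≤ C * ((k : ℝ) + 1)) (ht : |t| < 1) :
    Summable (fun k => a k * t ^ (2 * k)) := by
  have hC : 0 ≤ C := by simpa using (abs_nonneg _).trans (ha 0)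
  refine .of_norm_bounded ((summable_succ_mul_geometric (abs_nonneg t) ht).mul_left C)
    fun k => ?_
  rw [norm_mul, norm_eq_abs, norm_eq_abs, ← mul_assoc]
  exact mul_le_mul (ha k) (by simpa using abs_pow_two_mul_add_le le_rfl ht.le k 0)
    (abs_nonneg _) (by positivity)

lemma summable_mul_pow_two_mul {a : ℕ → ℝ} {C t : ℝ} (ha : ∀ k, |a k| ≤ C) (ht : |t| < 1) :
    Summable (fun k => a k * t ^ (2 * k)) := by
  have hC : 0 ≤ C := (abs_nonneg _).trans (ha 0)
  refine summable_mul_pow_two_mul_of_abs_le (C := C) (fun k => (ha k).trans ?_) ht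
  nlinarith [k.cast_nonneg (α := ℝ)]

theorem hasDerivAt_tsum_mul_pow {a : ℕ → ℝ} {C : ℝ} (ha : ∀ k, |a k| ≤ C) (m : ℕ) {t : ℝ}
    (ht : |t| < 1) :
    HasDerivAt (fun y => ∑' k, a k * y ^ (2 * k + m + 1))
      (∑' k, a k * (2 * k + m + 1) * t ^ (2 * k + m)) t := by
  set r := (1 + |t|) / 2 with hr
  have hr0 : 0 ≤ r := by positivity
  have hr1 : r < 1 := by linarith
  have htr : t ∈ Ioo (-r) r := ⟨by linarith [neg_abs_le t], by linarith [le_abs_self t]⟩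
  have hC : 0 ≤ C := (abs_nonneg _).trans (ha 0)
  refine hasDerivAt_tsum_of_isPreconnected (g := fun k y => a k * y ^ (2 * k + m + 1))
    (g' := fun k y => a k * (2 * k + m + 1) * y ^ (2 * k + m))
    (u := fun k : ℕ => C * (m + 2) * (((k : ℝ) + 1) * r ^ k))
    ((summable_succ_mul_geometric hr0 hr1).mul_left _) isOpen_Ioo isPreconnected_Ioo
    (fun k y _ => ?_) (fun k y hy => ?_) htr ?_ htr
  · have h := (hasDerivAt_pow (2 * k + m + 1) y).const_mul (a k)
    rw [Nat.add_sub_cancel] at h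
    exact h.congr_deriv (by push_cast; ring)
  · have hy : |y| ≤ r := abs_le.mpr ⟨hy.1.le, hy.2.le⟩
    have hw : (2 * k + m + 1 : ℝ) ≤ (m + 2) * ((k : ℝ) + 1) := by
      nlinarith [k.cast_nonneg (α := ℝ), m.cast_nonneg (α := ℝ)]
    rw [norm_eq_abs, abs_mul, abs_mul, abs_of_nonneg (by positivity : (0 : ℝ) ≤ 2 * k + m + 1)]
    calc |a k| * (2 * k + m + 1) * |y ^ (2 * k + m)|
        ≤ C * ((m + 2) * ((k : ℝ) + 1)) * r ^ k := by
          gcongr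
          · exact ha k
          · exact abs_pow_two_mul_add_le hy hr1.le k m
      _ = C * (m + 2) * (((k : ℝ) + 1) * r ^ k) := by ring
  · refine ((summable_mul_pow_two_mul ha ht).mul_right (t ^ (m + 1))).congr fun k => ?_
    ring

theorem hasDerivAt_tsum_mul_pow_two_mul {a : ℕ → ℝ} {C : ℝ} (ha : ∀ k, |a k| ≤ C) {t : ℝ}
    (ht : |t| < 1) :
    HasDerivAt (fun y => ∑' k, a k * y ^ (2 * k))
      (∑' k, a (k + 1) * (2 * k + 2) * t ^ (2 * k + 1)) t := by
  have hd := (hasDerivAt_tsum_mul_pow (fun k => ha (k + 1)) 1 ht).const_add (a 0)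
  refine (hd.congr_of_eventuallyEq ?_).congr_deriv ?_
  · filter_upwards [(isOpen_lt continuous_abs continuous_const).mem_nhds ht] with y hy
    rw [(summable_mul_pow_two_mul ha hy).tsum_eq_zero_add]
    simp [mul_add, add_assoc]
  · simp only [Nat.cast_one]
    congr! 2 with k
    ring

lemma abs_sin_half_lt_one {θ : ℝ} (hθ : θ ∈ Ioo (-π) π) : |sin (θ / 2)| < 1 := by
  have hc : 0 < cos (θ / 2) := cos_pos_of_mem_Ioo ⟨by linarith [hθ.1], by linarith [hθ.2]⟩
  rw [← sq_lt_one_iff_abs_lt_one]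
  nlinarith [sin_sq_add_cos_sq (θ / 2)]

lemma hasDerivAt_sin_half (θ : ℝ) :
    HasDerivAt (fun θ => sin (θ / 2)) (cos (θ / 2) / 2) θ := by
  simpa [div_eq_mul_inv] using ((hasDerivAt_id θ).div_const 2).sin

lemma hasDerivAt_cos_half (θ : ℝ) :
    HasDerivAt (fun θ => cos (θ / 2)) (-sin (θ / 2) / 2) θ := by
  simpa [div_eq_mul_inv] using ((hasDerivAt_id θ).div_const 2).cos

theorem hasDerivAt_tsum_mul_sin_half_pow {a : ℕ → ℝ} {C : ℝ} (ha : ∀ k, |a k| ≤ C) (m : ℕ)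
    {θ : ℝ} (hθ : θ ∈ Ioo (-π) π) :
    HasDerivAt (fun θ => ∑' k, a k * sin (θ / 2) ^ (2 * k + m + 1))
      ((∑' k, a k * (2 * k + m + 1) * sin (θ / 2) ^ (2 * k + m)) * (cos (θ / 2) / 2)) θ := by
  have h := hasDerivAt_tsum_mul_pow ha m (abs_sin_half_lt_one hθ)
  exact h.comp θ (hasDerivAt_sin_half θ)

theorem eq_of_hasDerivAt_eq_of_mem_Ioo {f g f' : ℝ → ℝ} {a b x₀ x : ℝ}
    (hf : ∀ y ∈ Ioo a b, HasDerivAt f (f' y) y) (hg : ∀ y ∈ Ioo a b, HasDerivAt g (f' y) y)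
    (hx₀ : x₀ ∈ Ioo a b) (hx : x ∈ Ioo a b) (h : f x₀ = g x₀) : f x = g x :=
  isOpen_Ioo.eqOn_of_deriv_eq isPreconnected_Ioo
    (fun y hy => (hf y hy).differentiableAt.differentiableWithinAt)
    (fun y hy => (hg y hy).differentiableAt.differentiableWithinAt)
    (fun y hy => (hf y hy).deriv.trans (hg y hy).deriv.symm) hx₀ h hx

theorem mul_eq_sin_of_hasDerivAt {f g : ℝ → ℝ} {ω a b x : ℝ}
    (hf : ∀ y ∈ Ioo a b, HasDerivAt f (g y) y)
    (hg : ∀ y ∈ Ioo a b, HasDerivAt g (-(ω ^ 2 * f y)) y)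
    (h0 : (0 : ℝ) ∈ Ioo a b) (hf0 : f 0 = 0) (hg0 : g 0 = 1) (hx : x ∈ Ioo a b) :
    ω * f x = sin (ω * x) := by
  have hsin (y : ℝ) : HasDerivAt (fun y => sin (ω * y)) (cos (ω * y) * ω) y := by
    simpa using ((hasDerivAt_id y).const_mul ω).sin
  have hcos (y : ℝ) : HasDerivAt (fun y => cos (ω * y)) (-sin (ω * y) * ω) y := by
    simpa using ((hasDerivAt_id y).const_mul ω).cos
  -- both combinations are first integrals of `f' = g, g' = -ω² f`
  have hp := eq_of_hasDerivAt_eq_of_mem_Ioo (f' := 0) (g := fun _ => 1)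
    (f := fun y => ω * f y * sin (ω * y) + g y * cos (ω * y))
    (fun y hy => ((((hf y hy).const_mul ω).mul (hsin y)).add ((hg y hy).mul (hcos y))).congr_deriv
      (by simp only [Pi.zero_apply]; ring))
    (fun y _ => hasDerivAt_const y 1) h0 hx (by simp [hg0])
  have hq := eq_of_hasDerivAt_eq_of_mem_Ioo (f' := 0) (g := fun _ => 0)
    (f := fun y => ω * f y * cos (ω * y) - g y * sin (ω * y))
    (fun y hy => ((((hf y hy).const_mul ω).mul (hcos y)).sub ((hg y hy).mul (hsin y))).congr_deriv
      (by simp only [Pi.zero_apply]; ring))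
    (fun y _ => hasDerivAt_const y 0) h0 hx (by simp [hf0])
  linear_combination sin (ω * x) * hp + cos (ω * x) * hq - ω * f x * sin_sq_add_cos_sq (ω * x)

lemma exists_abs_le_of_abs_succ_le {a : ℕ → ℝ} {K : ℕ} (h : ∀ k ≥ K, |a (k + 1)| ≤ |a k|) :
    ∃ C, ∀ k, |a k| ≤ C := by
  refine ⟨∑ j ∈ range (K + 1), |a j|, fun k => ?_⟩
  induction k with
  | zero => exact single_le_sum (fun j _ => abs_nonneg (a j)) (by simp)
  | succ k ih =>
    by_cases hk : K ≤ k
    · exact (h k hk).trans ih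
    · exact single_le_sum (fun j _ => abs_nonneg (a j)) (mem_range.mpr (by omega))

section Hypergeometric

variable (ν : ℝ)

/-- The `k`-th coefficient of `₂F₁(1/2 + ν, 1/2 - ν; c + 1/2; x)`. -/
noncomputable def hypCoeff (c : ℝ) (k : ℕ) : ℝ :=
  ∏ j ∈ range k, ((1/2 + ν + (j : ℝ)) * (1/2 - ν + (j : ℝ))) / ((c + 1/2 + j) * ((j : ℝ) + 1))

@[simp]
lemma hypCoeff_zero (c : ℝ) : hypCoeff ν c 0 = 1 := by simp [hypCoeff]

lemma hypCoeff_succ (c : ℝ) (k : ℕ) :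
    hypCoeff ν c (k + 1) = hypCoeff ν c k *
      ((1/2 + ν + k) * (1/2 - ν + k) / ((c + 1/2 + k) * ((k : ℝ) + 1))) :=
  prod_range_succ _ _

lemma abs_hypCoeff_succ_le {c : ℝ} (hc : 0 ≤ c) {k : ℕ} (hk : ν ^ 2 ≤ k) :
    |hypCoeff ν c (k + 1)| ≤ |hypCoeff ν c k| := by
  have hk0 : (0 : ℝ) ≤ k := k.cast_nonneg
  have hden : 0 < (c + 1/2 + k) * ((k : ℝ) + 1) := by positivity
  rw [hypCoeff_succ, abs_mul, abs_div, abs_of_pos hden]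
  refine mul_le_of_le_one_right (abs_nonneg _) ((div_le_one hden).mpr (abs_le.mpr ⟨?_, ?_⟩))
  · nlinarith
  · nlinarith

lemma exists_abs_hypCoeff_le {c : ℝ} (hc : 0 ≤ c) : ∃ C, ∀ k, |hypCoeff ν c k| ≤ C :=
  exists_abs_le_of_abs_succ_le (K := ⌈ν ^ 2⌉₊) fun _ hk =>
    abs_hypCoeff_succ_le ν hc (Nat.ceil_le.mp hk)

lemma hypCoeff_add_one {c : ℝ} (hc : 0 ≤ c) (k : ℕ) :
    (2 * k + 2 * c + 1) * hypCoeff ν (c + 1) k = (2 * c + 1) * hypCoeff ν c k := by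
  induction k with
  | zero => simp
  | succ k ih =>
    have hk0 : (0 : ℝ) ≤ k := k.cast_nonneg
    have h1 : c + 1/2 + (k : ℝ) ≠ 0 := by positivity
    have h2 : c + 1 + 1/2 + (k : ℝ) ≠ 0 := by positivity
    rw [hypCoeff_succ, hypCoeff_succ]
    push_cast
    field_simp
    linear_combination (1 + 2 * ν + 2 * k) * (1 - 2 * ν + 2 * k) * (2 * k + 2 * c + 3) * ih

/-- The hypergeometric equation for `₂F₁(1/2 + ν, 1/2 - ν; 1/2; x)`, coefficientwise. -/
lemma hypCoeff_zero_succ (k : ℕ) :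
    (2 * k + 2) * hypCoeff ν 0 (k + 1) - (2 * k + 1) * hypCoeff ν 0 k
      = -4 * ν ^ 2 * hypCoeff ν 1 k := by
  have h := hypCoeff_add_one ν le_rfl k
  have hk : (0 : ℝ) + 1/2 + k ≠ 0 := by positivity
  rw [zero_add] at h
  rw [hypCoeff_succ]
  field_simp
  linear_combination 4 * ν ^ 2 * h

lemma hypSeries_ode {t : ℝ} (ht : |t| < 1) :
    (1 - t ^ 2) * ∑' k, hypCoeff ν 0 (k + 1) * (2 * k + 2) * t ^ (2 * k + 1)
      - t * ∑' k, hypCoeff ν 0 k * t ^ (2 * k)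
      = -4 * ν ^ 2 * ∑' k, hypCoeff ν 1 k * t ^ (2 * k + 1) := by
  obtain ⟨C₀, hC₀⟩ := exists_abs_hypCoeff_le ν le_rfl
  obtain ⟨C₁, hC₁⟩ := exists_abs_hypCoeff_le ν zero_le_one
  have hw (k : ℕ) : |hypCoeff ν 0 (k + 1) * (2 * k + 2)| ≤ 2 * C₀ * ((k : ℝ) + 1) := by
    rw [abs_mul, abs_of_nonneg (by positivity : (0 : ℝ) ≤ 2 * k + 2)]
    linarith [mul_le_mul_of_nonneg_right (hC₀ (k + 1)) (by positivity : (0 : ℝ) ≤ 2 * k + 2)]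
  have hP : HasSum (fun k : ℕ => hypCoeff ν 0 (k + 1) * (2 * k + 2) * t ^ (2 * k + 1)) _ :=
    (((summable_mul_pow_two_mul_of_abs_le hw ht).mul_right t).congr fun k => by ring).hasSum
  have hH := (summable_mul_pow_two_mul hC₀ ht).hasSum
  have hG : HasSum (fun k => hypCoeff ν 1 k * t ^ (2 * k + 1)) _ :=
    (((summable_mul_pow_two_mul hC₁ ht).mul_right t).congr fun k => by ring).hasSum
  have hQ : HasSum (fun k : ℕ => 2 * k * hypCoeff ν 0 k * t ^ (2 * k + 1))
      (t ^ 2 * ∑' k, hypCoeff ν 0 (k + 1) * (2 * k + 2) * t ^ (2 * k + 1)) := by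
    refine (hasSum_nat_add_iff' 1).mp ?_
    simpa using (hP.mul_left (t ^ 2)).congr_fun fun k => by ring
  have h := ((hP.sub hQ).sub (hH.mul_left t)).unique <| (hG.mul_left (-4 * ν ^ 2)).congr_fun
    fun k => by linear_combination t ^ (2 * k + 1) * hypCoeff_zero_succ ν k
  linear_combination h

theorem tsum_hypCoeff_one_mul_sin_half_pow (hν : ν ≠ 0) {θ : ℝ} (hθ : θ ∈ Ioo (-π) π) :
    ∑' k, hypCoeff ν 1 k * sin (θ / 2) ^ (2 * k + 1) = sin (ν * θ) / (2 * ν) := by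
  obtain ⟨C₀, hC₀⟩ := exists_abs_hypCoeff_le ν le_rfl
  obtain ⟨C₁, hC₁⟩ := exists_abs_hypCoeff_le ν zero_le_one
  have hW (y : ℝ) (hy : y ∈ Ioo (-π) π) :
      HasDerivAt (fun θ => 2 * ∑' k, hypCoeff ν 1 k * sin (θ / 2) ^ (2 * k + 1))
        (cos (y / 2) * ∑' k, hypCoeff ν 0 k * sin (y / 2) ^ (2 * k)) y := by
    have h := ((hasDerivAt_tsum_mul_pow hC₁ 0 (abs_sin_half_lt_one hy)).comp y
      (hasDerivAt_sin_half y)).const_mul 2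
    refine h.congr_deriv ?_
    have hc (k : ℕ) := hypCoeff_add_one ν le_rfl k
    simp only [zero_add, mul_zero, add_zero, Nat.cast_zero] at hc ⊢
    rw [tsum_congr fun k => by rw [mul_comm (hypCoeff ν 1 k), hc k, one_mul]]
    ring
  have hV (y : ℝ) (hy : y ∈ Ioo (-π) π) :
      HasDerivAt (fun θ => cos (θ / 2) * ∑' k, hypCoeff ν 0 k * sin (θ / 2) ^ (2 * k))
        (-(ν ^ 2 * (2 * ∑' k, hypCoeff ν 1 k * sin (y / 2) ^ (2 * k + 1)))) y := by
    have hs := abs_sin_half_lt_one hy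
    have h := (hasDerivAt_cos_half y).mul
      ((hasDerivAt_tsum_mul_pow_two_mul hC₀ hs).comp y (hasDerivAt_sin_half y))
    refine h.congr_deriv ?_
    simp only [Function.comp_apply]
    linear_combination (1 / 2) * hypSeries_ode ν hs + (1 / 2) *
      (∑' k, hypCoeff ν 0 (k + 1) * (2 * k + 2) * sin (y / 2) ^ (2 * k + 1)) *
        sin_sq_add_cos_sq (y / 2)
  have h0 : (0 : ℝ) ∈ Ioo (-π) π := ⟨by linarith [pi_pos], pi_pos⟩
  have hV0 : cos (0 / 2) * ∑' k, hypCoeff ν 0 k * sin (0 / 2) ^ (2 * k) = 1 := by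
    rw [tsum_eq_single 0 fun k hk => by simp [hk]]
    simp
  have := mul_eq_sin_of_hasDerivAt hW hV h0 (by simp) hV0 hθ
  rw [eq_div_iff (mul_ne_zero two_ne_zero hν)]
  linear_combination this

end Hypergeometric

lemma add_sum_range_sub_mul_eq {d c : ℕ → ℝ} {n : ℕ} (hd0 : d 0 = 1) (hdn : d n = 0) :
    c 0 + ∑ k ∈ range n, (d (k + 1) - d k) * c (k + 1) =
      ∑ k ∈ range n, d k * (c k - c (k + 1)) := by
  have h1 := sum_range_succ' (fun k => d k * c k) n
  have h2 := sum_range_succ (fun k => d k * c k) n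
  rw [hd0, one_mul] at h1
  rw [hdn, zero_mul, add_zero] at h2
  simp only [sub_mul, mul_sub, sum_sub_distrib]
  linarith

section Trigonometric

variable (ν : ℝ)

noncomputable def trigCoeff (n k : ℕ) : ℝ :=
  ∏ q ∈ Icc 1 k, (((q : ℝ) - n) * ((q : ℝ) + ν - n)) / ((q : ℝ) * ((q : ℝ) + ν))

noncomputable def trigSum (n : ℕ) (θ : ℝ) : ℝ :=
  ∑ k ∈ range n, trigCoeff ν n k * sin ((1 - (n : ℝ) + ν + 2 * k) * θ)

/-- `sin (θ / 2) ^ (2 * n - 1)` times the right-hand side of the identity. -/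
noncomputable def closedForm (n : ℕ) (θ : ℝ) : ℝ :=
  (∏ p ∈ range n, (2 * (p : ℝ) + 1) / (ν - p)) / 2 ^ (3 * n - 2) * trigSum ν n θ

@[simp]
lemma trigCoeff_zero (n : ℕ) : trigCoeff ν n 0 = 1 := by simp [trigCoeff]

lemma trigCoeff_succ (n k : ℕ) :
    trigCoeff ν n (k + 1) = trigCoeff ν n k *
      (((k + 1 - n) * (k + 1 + ν - n)) / ((k + 1) * (k + 1 + ν))) := by
  rw [trigCoeff, prod_Icc_succ_top (by omega), ← trigCoeff]
  push_cast
  ring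

lemma trigCoeff_self {n : ℕ} (hn : 1 ≤ n) : trigCoeff ν n n = 0 :=
  prod_eq_zero (mem_Icc.mpr ⟨hn, le_rfl⟩) (by simp)

variable {ν}

lemma natCast_add_ne_zero (hν : ∀ m : ℤ, ν ≠ m) (k : ℕ) : (k : ℝ) + ν ≠ 0 := fun h =>
  hν (-k) (by push_cast; linarith)

lemma sub_natCast_ne_zero (hν : ∀ m : ℤ, ν ≠ m) (k : ℕ) : ν - k ≠ 0 := fun h =>
  hν k (by push_cast; linarith)

lemma trigCoeff_succ_mul (hν : ∀ m : ℤ, ν ≠ m) (n k : ℕ) :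
    trigCoeff ν (n + 1) k * ((k - n) * (k + ν - n)) = -n * (ν - n) * trigCoeff ν n k := by
  induction k with
  | zero => simp
  | succ k ih =>
    have h := natCast_add_ne_zero hν (k + 1)
    rw [trigCoeff_succ, trigCoeff_succ]
    push_cast at h ⊢
    field_simp
    linear_combination (k + 1 - n) * (k + 1 + ν - n) * ih

lemma trigCoeff_succ_succ_mul (hν : ∀ m : ℤ, ν ≠ m) (n k : ℕ) :
    trigCoeff ν (n + 1) (k + 1) * (ν - n + 2 * (k + 1)) =
      (ν - n) * (trigCoeff ν n (k + 1) - trigCoeff ν n k) := by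
  have h := natCast_add_ne_zero hν (k + 1)
  rw [trigCoeff_succ, trigCoeff_succ]
  push_cast at h ⊢
  field_simp
  linear_combination (ν - n + 2 * (k + 1)) * trigCoeff_succ_mul hν n k

lemma hasDerivAt_trigSum (n : ℕ) (θ : ℝ) :
    HasDerivAt (trigSum ν n) (∑ k ∈ range n, trigCoeff ν n k *
      ((1 - (n : ℝ) + ν + 2 * k) * cos ((1 - (n : ℝ) + ν + 2 * k) * θ))) θ := by
  have h := HasDerivAt.fun_sum (u := range n) fun k _ =>
    (((hasDerivAt_id θ).const_mul (1 - (n : ℝ) + ν + 2 * k)).sin).const_mul (trigCoeff ν n k)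
  exact h.congr_deriv (sum_congr rfl fun k _ => by simp only [id, mul_one]; ring)

lemma sum_trigCoeff_succ_mul_cos (hν : ∀ m : ℤ, ν ≠ m) {n : ℕ} (hn : 1 ≤ n) (θ : ℝ) :
    ∑ k ∈ range (n + 1), trigCoeff ν (n + 1) k * ((1 - ((n + 1 : ℕ) : ℝ) + ν + 2 * k) *
      cos ((1 - ((n + 1 : ℕ) : ℝ) + ν + 2 * k) * θ)) = 2 * (ν - n) * sin θ * trigSum ν n θ := by
  set c : ℕ → ℝ := fun k => cos ((ν - n + 2 * k) * θ)
  have hc (k : ℕ) : cos ((1 - ((n + 1 : ℕ) : ℝ) + ν + 2 * k) * θ) = c k := by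
    simp only [c]; push_cast; ring_nf
  have hsin (k : ℕ) : 2 * sin θ * sin ((1 - n + ν + 2 * k) * θ) = c k - c (k + 1) := by
    rw [mul_right_comm, two_mul_sin_mul_sin]
    simp only [c]
    push_cast
    ring_nf
  have hL (k : ℕ) : trigCoeff ν (n + 1) (k + 1) * ((1 - ((n + 1 : ℕ) : ℝ) + ν + 2 * (k + 1 : ℕ)) *
      cos ((1 - ((n + 1 : ℕ) : ℝ) + ν + 2 * (k + 1 : ℕ)) * θ)) =
        (ν - n) * ((trigCoeff ν n (k + 1) - trigCoeff ν n k) * c (k + 1)) := by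
    rw [hc]
    push_cast
    linear_combination c (k + 1) * trigCoeff_succ_succ_mul hν n k
  have hR (k : ℕ) : 2 * (ν - n) * sin θ * (trigCoeff ν n k * sin ((1 - n + ν + 2 * k) * θ)) =
      (ν - n) * (trigCoeff ν n k * (c k - c (k + 1))) := by
    linear_combination (ν - n) * trigCoeff ν n k * hsin k
  rw [sum_range_succ', trigSum, mul_sum, sum_congr rfl fun k _ => hL k,
    sum_congr rfl fun k _ => hR k, ← mul_sum, ← mul_sum,
    ← add_sum_range_sub_mul_eq (trigCoeff_zero ν n) (trigCoeff_self ν hn), hc, trigCoeff_zero]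
  push_cast
  ring

lemma hasDerivAt_closedForm_succ (hν : ∀ m : ℤ, ν ≠ m) {n : ℕ} (hn : 1 ≤ n) (θ : ℝ) :
    HasDerivAt (closedForm ν (n + 1)) ((2 * n + 1) / 4 * sin θ * closedForm ν n θ) θ := by
  refine ((hasDerivAt_trigSum (n + 1) θ).const_mul _).congr_deriv ?_
  rw [sum_trigCoeff_succ_mul_cos hν hn, closedForm, prod_range_succ,
    show 3 * (n + 1) - 2 = 3 * n - 2 + 3 by omega, pow_add]
  have := sub_natCast_ne_zero hν n
  field_simp
  ring

end Trigonometric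

theorem tsum_hypCoeff_mul_sin_half_pow {ν : ℝ} (hν : ∀ m : ℤ, ν ≠ m) (n : ℕ) {θ : ℝ}
    (hθ : θ ∈ Ioo (-π) π) :
    ∑' k, hypCoeff ν (n + 1 : ℕ) k * sin (θ / 2) ^ (2 * k + 2 * n + 1) =
      closedForm ν (n + 1) θ := by
  induction n generalizing θ with
  | zero =>
    have hν0 : ν ≠ 0 := by simpa using hν 0
    simp only [zero_add, Nat.cast_one, mul_zero, add_zero]
    rw [tsum_hypCoeff_one_mul_sin_half_pow ν hν0 hθ]
    simp [closedForm, trigSum]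
    field_simp
  | succ n ih =>
    have h0 : (0 : ℝ) ∈ Ioo (-π) π := ⟨by linarith [pi_pos], pi_pos⟩
    obtain ⟨C, hC⟩ := exists_abs_hypCoeff_le ν (Nat.cast_nonneg (α := ℝ) (n + 1 + 1))
    refine eq_of_hasDerivAt_eq_of_mem_Ioo (x₀ := 0) (f := fun θ =>
        ∑' k, hypCoeff ν (n + 1 + 1 : ℕ) k * sin (θ / 2) ^ (2 * k + 2 * (n + 1) + 1))
      (f' := fun y => (2 * (n + 1 : ℕ) + 1) / 4 * sin y * closedForm ν (n + 1) y)
      (fun y hy => ?_) (fun y _ => hasDerivAt_closedForm_succ hν (by omega) y) h0 hθ ?_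
    · refine (hasDerivAt_tsum_mul_sin_half_pow hC (2 * n + 2) hy).congr_deriv ?_
      have hterm (k : ℕ) : hypCoeff ν (n + 1 + 1 : ℕ) k * (2 * k + (2 * n + 2 : ℕ) + 1) *
          sin (y / 2) ^ (2 * k + (2 * n + 2)) = (2 * (n + 1) + 1) * sin (y / 2) *
            (hypCoeff ν (n + 1 : ℕ) k * sin (y / 2) ^ (2 * k + 2 * n + 1)) := by
        have h := hypCoeff_add_one ν (Nat.cast_nonneg (α := ℝ) (n + 1)) k
        rw [show 2 * k + (2 * n + 2) = 2 * k + 2 * n + 1 + 1 by ring, pow_succ]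
        push_cast at h ⊢
        linear_combination sin (y / 2) ^ (2 * k + 2 * n + 1) * sin (y / 2) * h
      have hsin : sin y = 2 * sin (y / 2) * cos (y / 2) := by
        rw [← sin_two_mul]; ring_nf
      rw [tsum_congr hterm, tsum_mul_left, ih hy, hsin]
      push_cast
      ring
    · simp [closedForm, trigSum]

end HypergeometricTrig

open HypergeometricTrig

theorem stmt16 (n : ℕ) (hn : 1 ≤ n) (ν : ℝ) (hν : ∀ m : ℤ, ν ≠ m)
    (θ : ℝ) (hθ : 0 < θ) (hθ' : θ < π) :
    Summable (fun k : ℕ =>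
      (∏ j ∈ Finset.range k,
          ((1/2 + ν + (j : ℝ)) * (1/2 - ν + (j : ℝ))) / (((n : ℝ) + 1/2 + j) * ((j : ℝ) + 1))) *
        Real.sin (θ / 2) ^ (2 * k)) ∧
    (∑' k : ℕ,
      (∏ j ∈ Finset.range k,
          ((1/2 + ν + (j : ℝ)) * (1/2 - ν + (j : ℝ))) / (((n : ℝ) + 1/2 + j) * ((j : ℝ) + 1))) *
        Real.sin (θ / 2) ^ (2 * k)) =
      (∏ p ∈ Finset.range n, (2 * (p : ℝ) + 1) / (ν - p)) *
        ((2 : ℝ) ^ (3 * n - 2) * Real.sin (θ / 2) ^ (2 * n - 1))⁻¹ *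
        ∑ k ∈ Finset.range n,
          (∏ q ∈ Finset.Icc 1 k, (((q : ℝ) - n) * ((q : ℝ) + ν - n)) / ((q : ℝ) * ((q : ℝ) + ν))) *
            Real.sin ((1 - (n : ℝ) + ν + 2 * k) * θ) := by
  obtain ⟨m, rfl⟩ : ∃ m, n = m + 1 := ⟨n - 1, by omega⟩
  have hθπ : θ ∈ Ioo (-π) π := ⟨by linarith, hθ'⟩
  have hs : sin (θ / 2) ^ (2 * (m + 1) - 1) ≠ 0 :=
    pow_ne_zero _ (sin_pos_of_pos_of_lt_pi (by linarith) (by linarith)).ne'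
  obtain ⟨C, hC⟩ := exists_abs_hypCoeff_le ν (Nat.cast_nonneg (α := ℝ) (m + 1))
  refine ⟨summable_mul_pow_two_mul hC (abs_sin_half_lt_one hθπ), ?_⟩
  rw [show 2 * (m + 1) - 1 = 2 * m + 1 by omega] at hs ⊢
  have key : (∑' k, hypCoeff ν (m + 1 : ℕ) k * sin (θ / 2) ^ (2 * k)) * sin (θ / 2) ^ (2 * m + 1)
      = closedForm ν (m + 1) θ := by
    rw [← tsum_mul_right, ← tsum_hypCoeff_mul_sin_half_pow hν m hθπ]
    exact tsum_congr fun k => by ring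
  show ∑' k, hypCoeff ν (m + 1 : ℕ) k * sin (θ / 2) ^ (2 * k) = _
  rw [← mul_inv_cancel_right₀ hs (∑' k, _), key, closedForm, trigSum, mul_inv]
  simp only [trigCoeff]
  ring
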